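/- Let z_ν = (q_ν, a_{1,ν},…,a_{d,ν}) ∈ ℤ^{d+1} be the best approximation vectors of α, fix ν, and define indices ν₁=ν, ν₂=ν+1, and inductively ν_j as the smallest μ ≥ ν_{j−1}+1 such that z_{ν₁},…,z_{ν_{j−1}},z_μ are linearly independent, obtaining d+1 linearly independent vectors z_{ν₁},…,z_{ν_{d+1}}. Let π_j be the real span of z_{ν₁},…,z_{ν_j}, let Γ_j = π_j ∩ ℤ^{d+1}, and let Δ_j be the j-dimensional fundamental volume of the lattice Γ_j. Then for every j = 1,…,d one has Δ_{j+1}/Δ_j ≤ 2√d · (q_{ν_{j+1}}/q_{ν_{j+1}−1}) · ξ_{ν_{j+1}−1}. -/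

import Mathlib

/-- Distance from a real number to the nearest integer. -/
noncomputable def dist01 (x : ℝ) : ℝ := |x - (round x : ℝ)|

/-- `max_{1 ≤ j ≤ d} ‖q α_j‖`. -/
noncomputable def simErr (d : ℕ) (α : Fin d → ℝ) (q : ℕ) : ℝ :=
  ⨆ j : Fin d, dist01 ((q : ℝ) * α j)

/-- `q` enumerates (in increasing order) all best approximation denominators of `α`. -/
def IsBestApproxDenoms (d : ℕ) (α : Fin d → ℝ) (q : ℕ → ℕ) : Prop :=
  StrictMono q ∧ (∀ ν, 0 < q ν) ∧
  (∀ ν, ∀ m : ℕ, 0 < m → m < q ν → simErr d α (q ν) < simErr d α m) ∧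
  (∀ m : ℕ, 0 < m →
    (∀ m' : ℕ, 0 < m' → m' < m → simErr d α m < simErr d α m') → ∃ ν, q ν = m)

/-- `z ν = (q ν, a_{1,ν}, …, a_{d,ν})` are the best approximation vectors of `α`:
the `q ν` are the best approximation denominators and the `a ν j` are nearest integers. -/
def IsSimBestApproxVecs (d : ℕ) (α : Fin d → ℝ) (q : ℕ → ℕ) (a : ℕ → Fin d → ℤ) : Prop :=
  IsBestApproxDenoms d α q ∧
  ∀ ν j, |(q ν : ℝ) * α j - (a ν j : ℝ)| = dist01 ((q ν : ℝ) * α j)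

/-- The `k`-dimensional volume of the parallelepiped spanned by `B`, i.e. the square root of
the Gram determinant; for a ℤ-basis of a rank-`k` lattice this is its fundamental volume. -/
noncomputable def gramVol {n k : ℕ} (B : Fin k → Fin n → ℝ) : ℝ :=
  Real.sqrt (Matrix.det (Matrix.of fun i i' : Fin k => ∑ l, B i l * B i' l))


/-!
Write `N = ν_{j+1}`. The lattice `Γ_{j+1}` contains the lattice spanned by `Γ_j` and `z_N`, so
`Δ_{j+1}` is at most the volume of that lattice, which is `Δ_j` times the distance from `z_N` to
`π_j`; that `z_N ∉ π_j` for `j = 1` holds because two best approximation vectors are never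
parallel. By the minimality in the choice of `N`, the vector `z_{N-1}` lies in `π_j`, so this
distance is at most the length of `z_N - (q_N / q_{N-1}) z_{N-1}`. Its first coordinate vanishes
and each other coordinate is `(q_N / q_{N-1}) (q_{N-1} α_i - a_{i,N-1}) - (q_N α_i - a_{i,N})`,
of absolute value at most `ξ_N + (q_N / q_{N-1}) ξ_{N-1} ≤ 2 (q_N / q_{N-1}) ξ_{N-1}`.
-/

open Matrix Set
open scoped InnerProductSpace

namespace Matrix

variable {E : Type*} [NormedAddCommGroup E] [InnerProductSpace ℝ E]

theorem gram_sum_smul {ι κ : Type*} [Fintype κ] (M : Matrix ι κ ℝ) (v : κ → E) :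
    gram ℝ (fun i => ∑ p, M i p • v p) = M * gram ℝ v * Mᵀ := by
  ext i j
  simp only [gram_apply, mul_apply, sum_inner, inner_sum, real_inner_smul_left,
    real_inner_smul_right, transpose_apply, Finset.sum_mul]
  exact Finset.sum_congr rfl fun p _ => Finset.sum_congr rfl fun p' _ => by ring

theorem det_gram_sum_smul {ι : Type*} [Fintype ι] [DecidableEq ι] (M : Matrix ι ι ℝ)
    (v : ι → E) :
    (gram ℝ (fun i => ∑ p, M i p • v p)).det = M.det ^ 2 * (gram ℝ v).det := by
  rw [gram_sum_smul, det_mul, det_mul, det_transpose]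
  ring

theorem det_gram_le_of_eq_sum_intCast_smul {ι : Type*} [Fintype ι] [DecidableEq ι]
    {B v : ι → E} (M : Matrix ι ι ℤ) (hv : ∀ i, v i = ∑ p, (M i p : ℝ) • B p)
    (hli : LinearIndependent ℝ v) :
    (gram ℝ B).det ≤ (gram ℝ v).det := by
  have hdet : (gram ℝ v).det = (M.det : ℝ) ^ 2 * (gram ℝ B).det := by
    rw [funext hv, Int.cast_det, ← det_gram_sum_smul]
    rfl
  have hM : M.det ≠ 0 := by
    intro h
    exact det_gram_ne_zero_iff_linearIndependent.mpr hli (by simp [hdet, h])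
  rw [hdet]
  refine le_mul_of_one_le_left (posSemidef_gram ℝ B).det_nonneg ?_
  exact_mod_cast one_le_sq_iff_one_le_abs _ |>.mpr (Int.one_le_abs hM)

theorem det_gram_snoc_of_forall_inner_eq_zero {k : ℕ} (v : Fin k → E) {r : E}
    (hr : ∀ i, ⟪v i, r⟫_ℝ = 0) :
    (gram ℝ (Fin.snoc v r : Fin (k + 1) → E)).det = ‖r‖ ^ 2 * (gram ℝ v).det := by
  rw [det_succ_row _ (Fin.last k), Fin.sum_univ_castSucc]
  have hsub : (gram ℝ (Fin.snoc v r : Fin (k + 1) → E)).submatrix Fin.castSucc Fin.castSucc =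
      gram ℝ v := by
    ext i j; simp
  simp [hsub, real_inner_comm _ r, hr]

theorem det_gram_snoc_add_sum_smul {k : ℕ} (v : Fin k → E) (w : E) (t : Fin k → ℝ) :
    (gram ℝ (Fin.snoc v (w + ∑ i, t i • v i) : Fin (k + 1) → E)).det =
      (gram ℝ (Fin.snoc v w : Fin (k + 1) → E)).det := by
  let c : Fin (k + 1) → ℝ := Fin.snoc t 1
  have hM : (updateRow 1 (Fin.last k) c).det = 1 := by
    have hc : ∑ p, c p • (1 : Matrix (Fin (k + 1)) (Fin (k + 1)) ℝ) p = c := by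
      ext l; simp [one_apply]
    simpa [hc, c] using det_updateRow_sum 1 (Fin.last k) c
  have hrow : (fun i => ∑ p, updateRow 1 (Fin.last k) c i p • (Fin.snoc v w : Fin (k + 1) → E) p)
      = Fin.snoc v (w + ∑ i, t i • v i) := by
    ext i
    induction i using Fin.lastCases with
    | last => simp [c, Fin.sum_univ_castSucc, add_comm]
    | cast i => simp [one_apply]
  rw [← hrow, det_gram_sum_smul, hM, one_pow, one_mul]

theorem det_gram_snoc_le {k : ℕ} (v : Fin k → E) (w : E) {u : E}
    (hu : u ∈ Submodule.span ℝ (range v)) :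
    (gram ℝ (Fin.snoc v w : Fin (k + 1) → E)).det ≤ ‖w - u‖ ^ 2 * (gram ℝ v).det := by
  set K := Submodule.span ℝ (range v)
  have : FiniteDimensional ℝ K := FiniteDimensional.span_of_finite ℝ (finite_range v)
  obtain ⟨t, ht⟩ := (Submodule.mem_span_range_iff_exists_fun ℝ).mp (K.starProjection_apply_mem w)
  have hr : ∀ i, ⟪v i, w - K.starProjection w⟫_ℝ = 0 := fun i =>
    (K.mem_orthogonal _).mp (K.sub_starProjection_mem_orthogonal w) _
      (Submodule.subset_span ⟨i, rfl⟩)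
  have hdist : ‖w - K.starProjection w‖ ≤ ‖w - u‖ := by
    rw [K.starProjection_minimal]
    exact ciInf_le ⟨0, forall_mem_range.2 fun _ => norm_nonneg _⟩ (⟨u, hu⟩ : K)
  calc (gram ℝ (Fin.snoc v w : Fin (k + 1) → E)).det
      = (gram ℝ (Fin.snoc v (w - K.starProjection w + ∑ i, t i • v i) :
          Fin (k + 1) → E)).det := by
        rw [ht, sub_add_cancel]
    _ = ‖w - K.starProjection w‖ ^ 2 * (gram ℝ v).det := by
        rw [det_gram_snoc_add_sum_smul, det_gram_snoc_of_forall_inner_eq_zero v hr]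
    _ ≤ ‖w - u‖ ^ 2 * (gram ℝ v).det := by
        gcongr
        exact (posSemidef_gram ℝ v).det_nonneg

end Matrix

theorem gramVol_eq_sqrt_det_gram {n k : ℕ} (B : Fin k → Fin n → ℝ) :
    gramVol B = √(gram ℝ fun i => (WithLp.toLp 2 (B i) : EuclideanSpace ℝ (Fin n))).det := by
  unfold gramVol
  congr 3
  ext i j
  simp [PiLp.inner_apply, mul_comm]

theorem gramVol_snoc_le {n k : ℕ} (B : Fin k → Fin n → ℝ) (x : Fin n → ℝ) {y : Fin n → ℝ}
    (hy : y ∈ Submodule.span ℝ (range B)) :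
    gramVol (Fin.snoc B x : Fin (k + 1) → Fin n → ℝ) ≤
      ‖(WithLp.toLp 2 (x - y) : EuclideanSpace ℝ (Fin n))‖ * gramVol B := by
  obtain ⟨t, rfl⟩ := (Submodule.mem_span_range_iff_exists_fun ℝ).mp hy
  have hmem : (WithLp.toLp 2 (∑ i, t i • B i) : EuclideanSpace ℝ (Fin n)) ∈
      Submodule.span ℝ (range fun i => (WithLp.toLp 2 (B i) : EuclideanSpace ℝ (Fin n))) := by
    simp only [WithLp.toLp_sum, WithLp.toLp_smul]
    exact Submodule.sum_mem _ fun i _ => Submodule.smul_mem _ _ (Submodule.subset_span ⟨i, rfl⟩)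
  have hsnoc : (fun i => (WithLp.toLp 2 ((Fin.snoc B x : Fin (k + 1) → Fin n → ℝ) i) :
      EuclideanSpace ℝ (Fin n))) = Fin.snoc (fun i => WithLp.toLp 2 (B i)) (WithLp.toLp 2 x) := by
    ext i
    induction i using Fin.lastCases <;> simp
  rw [gramVol_eq_sqrt_det_gram, gramVol_eq_sqrt_det_gram, hsnoc, ← Real.sqrt_sq (norm_nonneg _),
    ← Real.sqrt_mul (sq_nonneg _), WithLp.toLp_sub]
  exact Real.sqrt_le_sqrt (det_gram_snoc_le _ _ hmem)

theorem intCast_sum_smul {ι : Type*} [Fintype ι] {m : ℕ} (c : ι → ℤ) (B : ι → Fin m → ℤ) :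
    (fun l => ((∑ p, c p • B p) l : ℝ)) = ∑ p, (c p : ℝ) • fun l => (B p l : ℝ) := by
  ext l; simp

theorem gramVol_le_of_forall_mem_span_int {k m : ℕ} (B v : Fin k → Fin m → ℤ)
    (hv : ∀ i, v i ∈ Submodule.span ℤ (range B))
    (hli : LinearIndependent ℝ fun i l => (v i l : ℝ)) :
    gramVol (fun i l => (B i l : ℝ)) ≤ gramVol (fun i l => (v i l : ℝ)) := by
  choose M hM using fun i => (Submodule.mem_span_range_iff_exists_fun ℤ).mp (hv i)
  rw [gramVol_eq_sqrt_det_gram, gramVol_eq_sqrt_det_gram]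
  refine Real.sqrt_le_sqrt (det_gram_le_of_eq_sum_intCast_smul (Matrix.of M) (fun i => ?_) ?_)
  · rw [← hM i, intCast_sum_smul]
    simp
  · exact hli.map' (WithLp.linearEquiv 2 ℝ (Fin m → ℝ)).symm.toLinearMap (LinearEquiv.ker _)

theorem span_intCast_eq_of_span_int_eq {ι κ : Type*} [Fintype ι] {m : ℕ} {B : ι → Fin m → ℤ}
    {u : κ → Fin m → ℝ} (hu : ∀ k, ∃ x : Fin m → ℤ, (fun l => (x l : ℝ)) = u k)
    (hB : (Submodule.span ℤ (range B) : Set (Fin m → ℤ)) =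
      {v | (fun l => (v l : ℝ)) ∈ Submodule.span ℝ (range u)}) :
    Submodule.span ℝ (range fun i l => (B i l : ℝ)) = Submodule.span ℝ (range u) := by
  apply le_antisymm <;> rw [Submodule.span_le]
  · rintro _ ⟨i, rfl⟩
    have : B i ∈ (Submodule.span ℤ (range B) : Set (Fin m → ℤ)) :=
      Submodule.subset_span ⟨i, rfl⟩
    rwa [hB] at this
  · rintro _ ⟨k, rfl⟩
    obtain ⟨x, hx⟩ := hu k
    have : x ∈ (Submodule.span ℤ (range B) : Set (Fin m → ℤ)) := by
      rw [hB, mem_ofPred_eq, hx]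
      exact Submodule.subset_span ⟨k, rfl⟩
    obtain ⟨c, rfl⟩ := (Submodule.mem_span_range_iff_exists_fun ℤ).mp this
    rw [← hx, intCast_sum_smul]
    exact Submodule.sum_mem _ fun p _ => Submodule.smul_mem _ _ (Submodule.subset_span ⟨p, rfl⟩)

theorem gramVol_le_norm_sub_mul_gramVol {m k : ℕ} {u : Fin (k + 2) → Fin m → ℝ}
    (hu : ∀ i, ∃ x : Fin m → ℤ, (fun l => (x l : ℝ)) = u i) (hli : LinearIndependent ℝ u)
    {B1 : Fin (k + 1) → Fin m → ℤ} {B2 : Fin (k + 2) → Fin m → ℤ}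
    (hB1 : (Submodule.span ℤ (range B1) : Set (Fin m → ℤ)) =
      {v | (fun l => (v l : ℝ)) ∈ Submodule.span ℝ (range fun i : Fin (k + 1) => u i.castSucc)})
    (hB2 : (Submodule.span ℤ (range B2) : Set (Fin m → ℤ)) =
      {v | (fun l => (v l : ℝ)) ∈ Submodule.span ℝ (range u)})
    {y : Fin m → ℝ} (hy : y ∈ Submodule.span ℝ (range fun i : Fin (k + 1) => u i.castSucc)) :
    gramVol (fun i l => (B2 i l : ℝ)) ≤
      ‖(WithLp.toLp 2 (u (Fin.last _) - y) : EuclideanSpace ℝ (Fin m))‖ *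
        gramVol (fun i l => (B1 i l : ℝ)) := by
  have hspan := span_intCast_eq_of_span_int_eq (u := fun i : Fin (k + 1) => u i.castSucc)
    (fun i => hu i.castSucc) hB1
  have hsnoc : Fin.snoc (fun i : Fin (k + 1) => u i.castSucc) (u (Fin.last _)) = u :=
    Fin.snoc_init_self u
  obtain ⟨hinit, hlast⟩ := linearIndependent_finSnoc.mp (hsnoc ▸ hli)
  have hB1li : LinearIndependent ℝ fun i l => (B1 i l : ℝ) := by
    rw [linearIndependent_iff_card_eq_finrank_span, Set.finrank, hspan,
      finrank_span_eq_card hinit]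
  obtain ⟨x, hx⟩ := hu (Fin.last _)
  have hcast : (fun i l => ((Fin.snoc B1 x : Fin (k + 2) → Fin m → ℤ) i l : ℝ)) =
      Fin.snoc (fun i l => (B1 i l : ℝ)) (u (Fin.last _)) := by
    ext i
    induction i using Fin.lastCases <;> simp [← hx]
  have hmem : ∀ i, (Fin.snoc B1 x : Fin (k + 2) → Fin m → ℤ) i ∈ Submodule.span ℤ (range B2) := by
    intro i
    rw [← SetLike.mem_coe, hB2, mem_ofPred_eq, congrFun hcast i]
    induction i using Fin.lastCases with
    | last => simpa using Submodule.subset_span (mem_range_self (Fin.last _))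
    | cast i =>
      have hi : (fun l => (B1 i l : ℝ)) ∈
          Submodule.span ℝ (range fun i : Fin (k + 1) => u i.castSucc) :=
        hspan ▸ Submodule.subset_span (mem_range_self i)
      simpa using Submodule.span_mono (range_comp_subset_range Fin.castSucc u) hi
  calc gramVol (fun i l => (B2 i l : ℝ))
      ≤ gramVol (fun i l => ((Fin.snoc B1 x : Fin (k + 2) → Fin m → ℤ) i l : ℝ)) :=
        gramVol_le_of_forall_mem_span_int _ _ hmem
          (hcast ▸ linearIndependent_finSnoc.mpr ⟨hB1li, hspan ▸ hlast⟩)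
    _ ≤ _ := hcast ▸ gramVol_snoc_le _ _ (hspan ▸ hy)

theorem simErr_nonneg (d : ℕ) (α : Fin d → ℝ) (m : ℕ) : 0 ≤ simErr d α m :=
  Real.iSup_nonneg fun _ => abs_nonneg _

section BestApproximation

variable {d : ℕ} {α : Fin d → ℝ} {q : ℕ → ℕ} {a : ℕ → Fin d → ℤ} {z : ℕ → Fin (d + 1) → ℝ}

theorem IsSimBestApproxVecs.abs_sub_le_simErr (hba : IsSimBestApproxVecs d α q a) (ν : ℕ)
    (i : Fin d) : |(q ν : ℝ) * α i - a ν i| ≤ simErr d α (q ν) :=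
  hba.2 ν i ▸ le_ciSup (f := fun j => dist01 ((q ν : ℝ) * α j)) (finite_range _).bddAbove i

theorem IsSimBestApproxVecs.simErr_lt (hba : IsSimBestApproxVecs d α q a) {μ ν : ℕ}
    (h : μ < ν) : simErr d α (q ν) < simErr d α (q μ) :=
  hba.1.2.2.1 ν (q μ) (hba.1.2.1 μ) (hba.1.1 h)

theorem IsSimBestApproxVecs.linearIndependent_pair (hba : IsSimBestApproxVecs d α q a)
    (hz : ∀ ν, z ν = Fin.cons (q ν : ℝ) fun j => (a ν j : ℝ)) {μ ν : ℕ} (h : μ < ν) :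
    LinearIndependent ℝ ![z μ, z ν] := by
  have hqμ : (0 : ℝ) < q μ := by exact_mod_cast hba.1.2.1 μ
  have hz0 : z μ ≠ 0 := fun h0 => hqμ.ne' (by simpa [hz] using congrFun h0 0)
  refine (LinearIndependent.pair_iff' hz0).mpr fun c hc => (hba.simErr_lt h).not_ge ?_
  have hq : c * q μ = q ν := by simpa [hz] using congrFun hc 0
  have ha : ∀ i, c * a μ i = a ν i := fun i => by simpa [hz] using congrFun hc i.succ
  have hc1 : 1 ≤ c := by
    have : (q μ : ℝ) < q ν := by exact_mod_cast hba.1.1 h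
    nlinarith
  refine ciSup_mono (finite_range _).bddAbove fun i => ?_
  have he : (q ν : ℝ) * α i - a ν i = c * ((q μ : ℝ) * α i - a μ i) := by
    rw [← hq, ← ha]; ring
  rw [← hba.2 μ i, ← hba.2 ν i, he, abs_mul, abs_of_nonneg (show 0 ≤ c by linarith)]
  exact le_mul_of_one_le_left (abs_nonneg _) hc1

theorem IsSimBestApproxVecs.norm_sub_div_smul_le (hba : IsSimBestApproxVecs d α q a)
    (hz : ∀ ν, z ν = Fin.cons (q ν : ℝ) fun j => (a ν j : ℝ)) {μ ν : ℕ} (h : μ < ν) :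
    ‖(WithLp.toLp 2 (z ν - ((q ν : ℝ) / q μ) • z μ) : EuclideanSpace ℝ (Fin (d + 1)))‖ ≤
      2 * √d * ((q ν : ℝ) / q μ) * simErr d α (q μ) := by
  set c := (q ν : ℝ) / q μ
  set ξ := simErr d α (q μ)
  have hqμ : (0 : ℝ) < q μ := by exact_mod_cast hba.1.2.1 μ
  have hcq : c * q μ = q ν := div_mul_cancel₀ _ hqμ.ne'
  have hc1 : 1 ≤ c := (one_le_div hqμ).mpr (by exact_mod_cast (hba.1.1 h).le)
  have hcoord : ∀ i : Fin d, |(z ν - c • z μ) i.succ| ≤ 2 * c * ξ := by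
    intro i
    have he : (z ν - c • z μ) i.succ =
        c * ((q μ : ℝ) * α i - a μ i) - ((q ν : ℝ) * α i - a ν i) := by
      simp only [hz, Pi.sub_apply, Pi.smul_apply, Fin.cons_succ, smul_eq_mul, ← hcq]
      ring
    rw [he]
    calc _ ≤ |c * ((q μ : ℝ) * α i - a μ i)| + |(q ν : ℝ) * α i - a ν i| := abs_sub _ _
      _ ≤ c * ξ + ξ := by
        rw [abs_mul, abs_of_nonneg (by linarith)]
        gcongr
        · exact hba.abs_sub_le_simErr μ i
        · exact (hba.abs_sub_le_simErr ν i).trans (hba.simErr_lt h).le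
      _ ≤ 2 * c * ξ := by nlinarith [simErr_nonneg d α (q μ)]
  have h0 : (z ν - c • z μ) 0 = 0 := by simp [hz, ← hcq]
  have hsq : 2 * √d * c * ξ = √(d * (2 * c * ξ) ^ 2) := by
    rw [Real.sqrt_mul (Nat.cast_nonneg d), Real.sqrt_sq (by nlinarith [simErr_nonneg d α (q μ)])]
    ring
  rw [EuclideanSpace.norm_eq, hsq]
  gcongr
  simp only [Real.norm_eq_abs, sq_abs, Fin.sum_univ_succ, h0]
  calc 0 ^ 2 + ∑ i : Fin d, (z ν - c • z μ) i.succ ^ 2 ≤ ∑ _i : Fin d, (2 * c * ξ) ^ 2 := by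
        rw [zero_pow two_ne_zero, zero_add]
        exact Finset.sum_le_sum fun i _ =>
          sq_le_sq' (abs_le.mp (hcoord i)).1 (abs_le.mp (hcoord i)).2
    _ = d * (2 * c * ξ) ^ 2 := by simp

end BestApproximation

theorem ite_le_eq_snoc {V : Type*} (f : ℕ → V) (j : ℕ) (x : V) :
    (fun i : Fin (j + 2) => if (i : ℕ) ≤ j then f i else x) =
      Fin.snoc (fun i : Fin (j + 1) => f i) x := by
  funext i
  induction i using Fin.lastCases with
  | last => simp
  | cast i => simp [Nat.le_of_lt_succ i.isLt]

section Selection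

variable {V : Type*} [AddCommGroup V] [Module ℝ V]

def IsGreedyIndependentSelection (z : ℕ → V) (n : ℕ → ℕ) (d : ℕ) : Prop :=
  ∀ j : ℕ, 1 ≤ j → j < d →
    IsLeast {μ : ℕ | n j < μ ∧
        LinearIndependent ℝ (fun i : Fin (j + 2) => if (i : ℕ) ≤ j then z (n i) else z μ)}
      (n (j + 1))

variable {z : ℕ → V} {n : ℕ → ℕ} {d : ℕ}

theorem IsGreedyIndependentSelection.lt_succ (hsel : IsGreedyIndependentSelection z n d)
    (hn : n 1 = n 0 + 1) {j : ℕ} (hj : j < d) : n j < n (j + 1) := by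
  rcases j with _ | j
  · exact hn ▸ Nat.lt_succ_self _
  · exact (hsel (j + 1) (by omega) hj).1.1

theorem IsGreedyIndependentSelection.linearIndependent
    (hsel : IsGreedyIndependentSelection z n d) (h01 : LinearIndependent ℝ ![z (n 0), z (n 1)])
    {j : ℕ} (hj : j < d) : LinearIndependent ℝ fun i : Fin (j + 2) => z (n i) := by
  rcases j with _ | j
  · convert h01 using 1
    funext i
    fin_cases i <;> rfl
  · convert (hsel (j + 1) (by omega) hj).1.2 using 1
    funext i
    split_ifs with hi
    · rfl
    · congr 2
      omega

theorem IsGreedyIndependentSelection.pred_mem_span (hsel : IsGreedyIndependentSelection z n d)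
    (hn : n 1 = n 0 + 1) (h01 : LinearIndependent ℝ ![z (n 0), z (n 1)]) {j : ℕ} (hj : j < d) :
    z (n (j + 1) - 1) ∈ Submodule.span ℝ (range fun i : Fin (j + 1) => z (n i)) := by
  have hlt := hsel.lt_succ hn hj
  rcases (Nat.le_sub_one_of_lt hlt).eq_or_lt with heq | hlt'
  · rw [← heq]
    exact Submodule.subset_span ⟨Fin.last j, rfl⟩
  · rcases j with _ | j
    · simp [hn] at hlt'
    by_contra hnot
    have hprefix := (hsel.linearIndependent h01 hj).comp Fin.castSucc
      (Fin.castSucc_injective _)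
    have hite : LinearIndependent ℝ fun i : Fin (j + 1 + 2) =>
        if (i : ℕ) ≤ j + 1 then z (n i) else z (n (j + 1 + 1) - 1) := by
      rw [ite_le_eq_snoc (fun k => z (n k))]
      exact linearIndependent_finSnoc.mpr ⟨hprefix, hnot⟩
    have := (hsel (j + 1) (by omega) hj).2 ⟨hlt', hite⟩
    omega

end Selection

theorem fundamental_volume_ratio_bound
    (d : ℕ) (α : Fin d → ℝ) (q : ℕ → ℕ) (a : ℕ → Fin d → ℤ)
    (hba : IsSimBestApproxVecs d α q a)
    (z : ℕ → Fin (d + 1) → ℝ)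
    (hz : ∀ ν, z ν = Fin.cons (q ν : ℝ) (fun j => (a ν j : ℝ)))
    -- the selected indices ν₁ = ν₀, ν₂ = ν₀ + 1, ν₃, …, ν_{d+1} (0-indexed by `n`):
    (ν₀ : ℕ) (n : ℕ → ℕ)
    (hn0 : n 0 = ν₀) (hn1 : n 1 = ν₀ + 1)
    (hsel : ∀ j : ℕ, 1 ≤ j → j < d →
      IsLeast {μ : ℕ | n j < μ ∧
          LinearIndependent ℝ (fun i : Fin (j + 2) =>
            if (i : ℕ) ≤ j then z (n i) else z μ)}
        (n (j + 1))) :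
    -- for every j = 1, …, d (here 0-indexed: `j < d`), and every pair of ℤ-bases
    -- of the lattices Γ_j = π_j ∩ ℤ^{d+1} and Γ_{j+1} = π_{j+1} ∩ ℤ^{d+1}:
    ∀ j : ℕ, j < d →
      ∀ B1 : Fin (j + 1) → Fin (d + 1) → ℤ, ∀ B2 : Fin (j + 2) → Fin (d + 1) → ℤ,
      (LinearIndependent ℤ B1 ∧
        (Submodule.span ℤ (Set.range B1) : Set (Fin (d + 1) → ℤ)) =
          {v : Fin (d + 1) → ℤ | (fun l => (v l : ℝ)) ∈
            Submodule.span ℝ (Set.range fun i : Fin (j + 1) => z (n i))}) →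
      (LinearIndependent ℤ B2 ∧
        (Submodule.span ℤ (Set.range B2) : Set (Fin (d + 1) → ℤ)) =
          {v : Fin (d + 1) → ℤ | (fun l => (v l : ℝ)) ∈
            Submodule.span ℝ (Set.range fun i : Fin (j + 2) => z (n i))}) →
      gramVol (fun i l => (B2 i l : ℝ)) / gramVol (fun i l => (B1 i l : ℝ)) ≤
        2 * Real.sqrt d * ((q (n (j + 1)) : ℝ) / (q (n (j + 1) - 1) : ℝ)) *
          simErr d α (q (n (j + 1) - 1)) := by
  intro j hj B1 B2 ⟨_, hB1⟩ ⟨_, hB2⟩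
  replace hsel : IsGreedyIndependentSelection z n d := hsel
  have hn : n 1 = n 0 + 1 := by rw [hn0, hn1]
  have h01 : LinearIndependent ℝ ![z (n 0), z (n 1)] := by
    rw [hn0, hn1]
    exact hba.linearIndependent_pair hz (Nat.lt_succ_self ν₀)
  have hpred : n (j + 1) - 1 < n (j + 1) := by
    have := hsel.lt_succ hn hj
    omega
  have hint : ∀ i : Fin (j + 2), ∃ x : Fin (d + 1) → ℤ, (fun l => (x l : ℝ)) = z (n i) :=
    fun i => ⟨Fin.cons (q (n i) : ℤ) (a (n i)), by
      rw [hz]; funext l; cases l using Fin.cases <;> simp⟩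
  have hvol := gramVol_le_norm_sub_mul_gramVol hint (hsel.linearIndependent h01 hj)
    hB1 hB2 (Submodule.smul_mem _ ((q (n (j + 1)) : ℝ) / q (n (j + 1) - 1))
      (hsel.pred_mem_span hn h01 hj))
  refine div_le_of_le_mul₀ (Real.sqrt_nonneg _)
    (mul_nonneg (by positivity) (simErr_nonneg _ _ _)) (hvol.trans ?_)
  exact mul_le_mul_of_nonneg_right (hba.norm_sub_div_smul_le hz hpred) (Real.sqrt_nonneg _)
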